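/- arXiv:1109.6309 — 2 statements merged into one kernel-verified Lean document; each statement's English description precedes it below -/
import Mathlib

section
/- Let A be an alphabet and L a set of nonempty words over A (the left-hand sides of a minimal rewriting system) such that no element of L contains another element of L as a proper factor, and no element of L contains any element of L as a proper factor of itself. Suppose y ∈ A* is irreducible (contains no element of L as a factor), a ∈ A, and the word ya is reducible (contains some element of L as a factor). Then there exists a unique factorization y = w·ũ with w, ũ ∈ A* such that ũa ∈ L. -/
/-! A factor of `y ++ [a]` that is not a factor of `y` must be a suffix of `y ++ [a]`, so an
irreducible `y` with `y ++ [a]` reducible has a suffix `ũ` with `ũ ++ [a] ∈ L`. Two such suffixes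
are comparable as suffixes of `y ++ [a]`, hence one is a factor of the other, and minimality
forces them to coincide. -/

namespace List

variable {A : Type*}

theorem eq_of_mem_of_isSuffix_of_isSuffix {L : Set (List A)}
    (hmin : ∀ l ∈ L, ∀ u ∈ L, u <:+: l → u = l) {u v l : List A}
    (hu : u ∈ L) (hv : v ∈ L) (hul : u <:+ l) (hvl : v <:+ l) : u = v := by
  rcases suffix_or_suffix_of_suffix hul hvl with huv | hvu
  · exact hmin v hv u hu huv.isInfix
  · exact (hmin u hu v hv hvu.isInfix).symm

theorem exists_append_eq_and_concat_mem {L : Set (List A)} {y : List A}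
    (hy : ∀ u ∈ L, ¬ u <:+: y) {a : A} (hya : ∃ u ∈ L, u <:+: y ++ [a]) :
    ∃ w v, w ++ v = y ∧ v ++ [a] ∈ L := by
  obtain ⟨u, huL, hu⟩ := hya
  have hsuf : u <:+ y ++ [a] := (infix_concat_iff.mp hu).resolve_right (hy u huL)
  rcases suffix_concat_iff.mp hsuf with rfl | ⟨v, rfl, ⟨w, hwv⟩⟩
  · exact absurd nil_infix (hy [] huL)
  · exact ⟨w, v, hwv, huL⟩

end List

theorem stmt_5_general {A : Type*} (L : Set (List A))
    (hmin : ∀ l ∈ L, ∀ u ∈ L, u <:+: l → u = l)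
    (y : List A) (hy : ∀ u ∈ L, ¬ u <:+: y) (a : A)
    (hya : ∃ u ∈ L, u <:+: y ++ [a]) :
    ∃! p : List A × List A, p.1 ++ p.2 = y ∧ p.2 ++ [a] ∈ L := by
  obtain ⟨w, v, hwv, hvL⟩ := List.exists_append_eq_and_concat_mem hy hya
  refine ⟨(w, v), ⟨hwv, hvL⟩, ?_⟩
  rintro ⟨w', v'⟩ ⟨hwv', hvL'⟩
  have hv : v' = v := by
    have hsuf : ∀ {w u : List A}, w ++ u = y → u ++ [a] <:+ y ++ [a] := fun h =>
      List.suffix_append_self_iff.mpr ⟨_, h⟩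
    simpa using List.eq_of_mem_of_isSuffix_of_isSuffix hmin hvL' hvL (hsuf hwv') (hsuf hwv)
  subst hv
  simp only [Prod.mk.injEq, and_true]
  exact List.append_cancel_right (hwv'.trans hwv.symm)

/-- For a minimal rewriting system (no left-hand side contains a left-hand side
as a proper factor), if `y` is irreducible but `y ++ [a]` is reducible, then there
is a unique factorization `y = w ++ ũ` with `ũ ++ [a]` a left-hand side. -/
theorem stmt_5 {A : Type*} (L : Set (List A)) (hne : ∀ l ∈ L, l ≠ [])
    (hmin : ∀ l ∈ L, ∀ u ∈ L, u <:+: l → u = l)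
    (y : List A) (hy : ∀ u ∈ L, ¬ u <:+: y) (a : A)
    (hya : ∃ u ∈ L, u <:+: y ++ [a]) :
    ∃! p : List A × List A, p.1 ++ p.2 = y ∧ p.2 ++ [a] ∈ L :=
  stmt_5_general L hmin y hy a hya
end

section
/- Let G be a group with finite symmetric generating set A, let C = {y_g : g ∈ G} ⊆ A* be a prefix-closed set of normal forms with y_1 the empty word, and call a directed edge (g, a) of the Cayley graph degenerate if y_g·a = y_{ga} or y_g = y_{ga}·a⁻¹ (as words). Suppose w' = a₁⋯aₙ is a freely reduced word over A such that for each 1 ≤ i ≤ n the edge (a₁⋯a_{i-1}, a_i) is degenerate. Then w' = y_{w'}; that is, w' is itself the normal form of the element it represents, and moreover every prefix of w' is in C. -/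
/-!
Induct along the word: if the prefix `u = w'.take i` is the normal form of `g`, the edge
`(g, a)` with `a = w'[i]` is degenerate. In the first case `u ++ [a]` is the normal form of
`g * ev a`. In the second, `u` would end in `ι a`, so `w'` would contain the cancelling pair
`ι a, a`, contradicting free reduction. Prefixes of `w'` are exactly its `take i`.
-/

theorem exists_eq_append_cons_inv_cons_of_take_eq {A : Type*} {ι : A → A}
    (hι : ∀ a : A, ι (ι a) = a) {w u : List A} {i : ℕ} (hi : i < w.length)
    (h : w.take i = u ++ [ι w[i]]) :
    ∃ (x : List A) (a : A) (z : List A), w = x ++ a :: ι a :: z := by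
  refine ⟨u, ι w[i], w.drop (i + 1), ?_⟩
  calc w = w.take i ++ w.drop i := (List.take_append_drop i w).symm
    _ = (u ++ [ι w[i]]) ++ w[i] :: w.drop (i + 1) := by rw [h, List.drop_eq_getElem_cons hi]
    _ = u ++ ι w[i] :: ι (ι w[i]) :: w.drop (i + 1) := by simp [hι]

theorem take_eq_normalForm_of_degenerate {A : Type*} {G : Type*} [Group G]
    {ev : A → G} {ι : A → A} (hι : ∀ a : A, ι (ι a) = a) {y : G → List A} (hy1 : y 1 = [])
    {w : List A} (hred : ¬ ∃ (x : List A) (a : A) (z : List A), w = x ++ a :: ι a :: z)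
    (hdeg : ∀ (i : ℕ) (hi : i < w.length),
      y ((w.take i).map ev).prod ++ [w[i]] = y (((w.take i).map ev).prod * ev w[i]) ∨
        y ((w.take i).map ev).prod = y (((w.take i).map ev).prod * ev w[i]) ++ [ι w[i]])
    {i : ℕ} (hi : i ≤ w.length) :
    w.take i = y ((w.take i).map ev).prod := by
  induction i with
  | zero => simp [hy1]
  | succ i ih =>
    have hi : i < w.length := hi
    have ih := ih hi.le
    rcases hdeg i hi with hext | hback
    · simp only [List.take_succ_eq_append_getElem hi, List.map_append, List.map_singleton,
        List.prod_append, List.prod_singleton, ← hext, ← ih]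
    · exact (hred (exists_eq_append_cons_inv_cons_of_take_eq hι hi (ih.trans hback))).elim

theorem stmt_18_general {A : Type*} {G : Type*} [Group G]
    (ev : A → G) (ι : A → A)
    (hι : ∀ a : A, ι (ι a) = a)
    (y : G → List A)
    (hy1 : y 1 = [])
    (w' : List A)
    (hred : ¬ ∃ (x : List A) (a : A) (z : List A), w' = x ++ a :: ι a :: z)
    (hdeg : ∀ (i : ℕ) (hi : i < w'.length),
      (let g : G := (((w'.take i).map ev).prod);
       let a : A := w'.get ⟨i, hi⟩;
       y g ++ [a] = y (g * ev a) ∨ y g = y (g * ev a) ++ [ι a])) :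
    w' = y ((w'.map ev).prod) ∧
      ∀ x : List A, x <+: w' → x = y ((x.map ev).prod) := by
  have htake (i : ℕ) (hi : i ≤ w'.length) : w'.take i = y ((w'.take i).map ev).prod :=
    take_eq_normalForm_of_degenerate hι hy1 hred hdeg hi
  refine ⟨by simpa using htake w'.length le_rfl, fun x hx => ?_⟩
  rw [List.prefix_iff_eq_take.mp hx]
  exact htake x.length hx.length_le

/-- If every edge along a freely reduced word `w'` is degenerate (with respect to
a set of normal forms `y` with `y 1 = []`), then `w'` is itself the normal form of
the element it represents, and every prefix of `w'` is a normal form. -/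
theorem stmt_18 {A : Type*} {G : Type*} [Group G]
    (ev : A → G) (ι : A → A)
    (hι : ∀ a : A, ι (ι a) = a) (hιev : ∀ a : A, ev (ι a) = (ev a)⁻¹)
    (y : G → List A) (hyrep : ∀ g : G, ((y g).map ev).prod = g)
    (hy1 : y 1 = [])
    (w' : List A)
    (hred : ¬ ∃ (x : List A) (a : A) (z : List A), w' = x ++ a :: ι a :: z)
    (hdeg : ∀ (i : ℕ) (hi : i < w'.length),
      (let g : G := (((w'.take i).map ev).prod);
       let a : A := w'.get ⟨i, hi⟩;
       y g ++ [a] = y (g * ev a) ∨ y g = y (g * ev a) ++ [ι a])) :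
    w' = y ((w'.map ev).prod) ∧
      ∀ x : List A, x <+: w' → x = y ((x.map ev).prod) :=
  stmt_18_general ev ι hι y hy1 w' hred hdeg
end
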